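/- arXiv:math/0606415 — 4 statements merged into one kernel-verified Lean document; each statement's English description precedes it below -/
import Mathlib

section
/- If m < n, then ℕ^n (vectors with all coordinates positive integers) is not contained in the union of finitely many translates of subspaces of ℚ^n each of dimension at most m. -/
/-!
Every translate `v + V` with `dim V < n` lies in an affine hyperplane `f x = c` with `f ≠ 0`.
Along the moment curve `t ↦ (t, t², …, tⁿ)` the equation `f x = c` becomes a nonzero
polynomial equation in `t`, so each hyperplane contains only finitely many of its points.
Hence some positive integer `s` gives a point `(s, s², …, sⁿ) ∈ ℕⁿ` outside all the translates.
-/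

open Polynomial

variable {K : Type*}

def momentCurve [Monoid K] (n : ℕ) (t : K) : Fin n → K := fun k => t ^ ((k : ℕ) + 1)

lemma LinearMap.apply_eq_sum_mul_single [CommSemiring K] {n : ℕ} (f : (Fin n → K) →ₗ[K] K)
    (x : Fin n → K) : f x = ∑ k, x k * f (Pi.single k 1) := by
  conv_lhs => rw [← Finset.univ_sum_single x]
  rw [map_sum]
  refine Finset.sum_congr rfl fun k _ => ?_
  rw [← smul_eq_mul, ← map_smul, ← Pi.single_smul', smul_eq_mul, mul_one]

lemma eval_X_mul_ofFn [CommRing K] [DecidableEq K] {n : ℕ} (w : Fin n → K) (t : K) :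
    (X * ofFn n w).eval t = ∑ k : Fin n, t ^ ((k : ℕ) + 1) * w k := by
  simp [ofFn_eq_sum_monomial, eval_finsetSum, Finset.mul_sum, pow_succ, mul_comm, mul_left_comm]

lemma finite_setOf_sum_pow_mul_eq [CommRing K] [IsDomain K] {n : ℕ} {w : Fin n → K}
    (hw : w ≠ 0) (c : K) : {t : K | ∑ k : Fin n, t ^ ((k : ℕ) + 1) * w k = c}.Finite := by
  classical
  obtain ⟨k, hk⟩ := Function.ne_iff.1 hw
  have hP : X * ofFn n w - C c ≠ 0 := fun h => hk <| by
    simpa [coeff_X_mul, coeff_C] using congrArg (coeff · ((k : ℕ) + 1)) h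
  refine (finite_setOfPred_isRoot hP).subset fun t ht => ?_
  rw [Set.mem_ofPred_eq, IsRoot, eval_sub, eval_X_mul_ofFn, eval_C, ht, sub_self]

theorem finite_setOf_apply_momentCurve_eq [CommRing K] [IsDomain K] {n : ℕ}
    {f : (Fin n → K) →ₗ[K] K} (hf : f ≠ 0) (c : K) :
    {t : K | f (momentCurve n t) = c}.Finite := by
  have hw : (fun k => f (Pi.single k 1)) ≠ 0 := fun h => hf <| LinearMap.ext fun x => by
    rw [f.apply_eq_sum_mul_single, LinearMap.zero_apply]
    simp [funext_iff.1 h]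
  convert finite_setOf_sum_pow_mul_eq hw c using 4 with t
  exact f.apply_eq_sum_mul_single _

/-- If `m < n`, then ℕ^n (vectors with all positive coordinates, viewed in ℚ^n)
is not contained in the union of finitely many translates of subspaces of ℚ^n
each of dimension at most `m`. -/
theorem stmt0 (m n : ℕ) (hmn : m < n) (ι : Type) [Fintype ι]
    (v : ι → Fin n → ℚ) (V : ι → Submodule ℚ (Fin n → ℚ))
    (hdim : ∀ i, Module.finrank ℚ (V i) ≤ m) :
    ¬ (∀ x : Fin n → ℕ, (∀ k, 0 < x k) →
        ∃ i, (fun k => (x k : ℚ)) - v i ∈ V i) := by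
  intro hcover
  have hproper (i : ι) : V i < ⊤ :=
    Submodule.lt_top_of_finrank_lt_finrank <| by simpa using (hdim i).trans_lt hmn
  choose f hf0 hVf using fun i => (V i).exists_le_ker_of_lt_top (hproper i)
  have hbad : (⋃ i, {t : ℚ | f i (momentCurve n t) = f i (v i)}).Finite :=
    Set.finite_iUnion fun i => finite_setOf_apply_momentCurve_eq (hf0 i) _
  obtain ⟨s, hs0, hs⟩ :=
    (Set.Ioi_infinite 0).exists_notMem_finite (hbad.preimage Nat.cast_injective.injOn)
  obtain ⟨i, hi⟩ := hcover (fun k => s ^ ((k : ℕ) + 1)) fun k => pow_pos hs0 _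
  have hcast : (fun k : Fin n => ((s ^ ((k : ℕ) + 1) : ℕ) : ℚ)) = momentCurve n (s : ℚ) := by
    ext k; simp [momentCurve]
  rw [hcast] at hi
  exact hs <| Set.mem_iUnion.2 ⟨i, sub_eq_zero.1 <| by simpa using hVf i hi⟩
end

section
/- For any positive integers k, m, n, any translate of an m-dimensional ℚ-subspace of ℚ^n contains at most k^m points of the box {1,...,k}^n. -/
open Module Set

/-- There is a set `I` of `m` coordinates such that any element of `V` vanishing on `I`
vanishes. -/
lemma exists_coords (m n : ℕ) (hm : 0 < m) (V : Submodule ℚ (Fin n → ℚ))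
    (hV : Module.finrank ℚ V = m) :
    ∃ I : Finset (Fin n), I.card = m ∧
      ∀ x ∈ V, (∀ i ∈ I, x i = 0) → x = 0 := by
  haveI : FiniteDimensional ℚ V := FiniteDimensional.of_finrank_pos (hV ▸ hm)
  set φ : Fin n → Module.Dual ℚ V := fun i => (LinearMap.proj i).comp V.subtype with hφ
  have hsep : ∀ y : V, (∀ i, φ i y = 0) → y = 0 := by
    intro y hy
    ext i
    exact hy i
  -- span of coordinate functionals is everything
  have hspan : Submodule.span ℚ (Set.range φ) = ⊤ := by
    set W := Submodule.span ℚ (Set.range φ)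
    have hco : W.dualCoannihilator = ⊥ := by
      rw [eq_bot_iff]
      intro y hy
      rw [Submodule.mem_dualCoannihilator] at hy
      have : y = 0 := hsep y fun i => hy (φ i) (Submodule.subset_span ⟨i, rfl⟩)
      simp [this]
    have h1 := Subspace.finrank_add_finrank_dualCoannihilator_eq W
    rw [hco] at h1
    simp only [finrank_bot, add_zero] at h1
    exact Submodule.eq_top_of_finrank_eq (by rw [h1, Subspace.dual_finrank_eq, hV])
  obtain ⟨b, hb_sub, hb_span, hb_ind⟩ := exists_linearIndependent ℚ (Set.range φ)
  rw [hspan] at hb_span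
  -- b is a basis of the dual, hence finite of card m
  have hb_fin : b.Finite := hb_ind.setFinite
  haveI := hb_fin.fintype
  have hb_card : b.toFinset.card = m := by
    have h2 : Module.finrank ℚ (Module.Dual ℚ V) = m := by
      rw [Subspace.dual_finrank_eq, hV]
    have := finrank_span_set_eq_card hb_ind
    rw [hb_span, finrank_top] at this
    rw [← this, h2]
  -- choose preimages
  have hchoice : ∀ f ∈ b, ∃ i : Fin n, φ i = f := fun f hf => hb_sub hf
  choose g hg using hchoice
  classical
  set I : Finset (Fin n) := b.toFinset.attach.image
    (fun f => g f.1 (Set.mem_toFinset.mp f.2)) with hI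
  have hIcard : I.card = m := by
    rw [hI, Finset.card_image_of_injective _ ?_, Finset.card_attach, hb_card]
    intro f₁ f₂ h
    have := congrArg φ h
    rw [hg _ (Set.mem_toFinset.mp f₁.2), hg _ (Set.mem_toFinset.mp f₂.2)] at this
    exact Subtype.ext this
  refine ⟨I, hIcard, fun x hx hx0 => ?_⟩
  -- every functional in b vanishes on ⟨x, hx⟩
  have hbz : ∀ f ∈ b, f ⟨x, hx⟩ = 0 := by
    intro f hf
    have hi : g f hf ∈ I := by
      rw [hI]
      exact Finset.mem_image.mpr ⟨⟨f, Set.mem_toFinset.mpr hf⟩, Finset.mem_attach _ _, rfl⟩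
    have := hx0 _ hi
    rw [← hg f hf]
    exact this
  have hz : (⟨x, hx⟩ : V) = 0 := by
    rw [← Module.forall_dual_apply_eq_zero_iff ℚ]
    intro f
    have hf : f ∈ Submodule.span ℚ b := by rw [hb_span]; trivial
    induction hf using Submodule.span_induction with
    | mem f hf => exact hbz f hf
    | zero => rfl
    | add f₁ f₂ _ _ h₁ h₂ => simp [h₁, h₂]
    | smul c f _ h => simp [h]
  exact congrArg Subtype.val hz

/-- Any translate of an `m`-dimensional ℚ-subspace of ℚ^n contains at most `k^m`
points of the box `{1,…,k}^n` (integer points). -/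
theorem stmt1 (k m n : ℕ) (hk : 0 < k) (hm : 0 < m) (hn : 0 < n)
    (V : Submodule ℚ (Fin n → ℚ)) (hV : Module.finrank ℚ V = m)
    (v : Fin n → ℚ) :
    Set.ncard {x : Fin n → ℤ | (∀ i, 1 ≤ x i ∧ x i ≤ (k : ℤ)) ∧
      (fun i => (x i : ℚ)) - v ∈ V} ≤ k ^ m := by
  classical
  obtain ⟨I, hIcard, hI⟩ := exists_coords m n hm V hV
  set S := {x : Fin n → ℤ | (∀ i, 1 ≤ x i ∧ x i ≤ (k : ℤ)) ∧
      (fun i => (x i : ℚ)) - v ∈ V} with hS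
  set T : Set ((i : I) → ℤ) := Set.pi Set.univ (fun _ => Set.Icc 1 (k : ℤ)) with hT
  have hTfin : T = ↑(Fintype.piFinset (fun _ : I => Finset.Icc 1 (k : ℤ))) := by
    rw [hT, Fintype.coe_piFinset]
    simp
  have hmap : ∀ x ∈ S, (fun i : I => x i) ∈ T := by
    intro x hx
    intro i _
    exact ⟨(hx.1 i).1, (hx.1 i).2⟩
  have hinj : Set.InjOn (fun (x : Fin n → ℤ) => fun i : I => x i) S := by
    intro x hx y hy hxy
    have hz : ((fun i => ((x i : ℚ))) - fun i => ((y i : ℚ))) ∈ V := by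
      have := V.sub_mem hx.2 hy.2
      simpa using this
    have hz0 : ∀ i ∈ I, ((fun i => ((x i : ℚ))) - fun i => ((y i : ℚ))) i = 0 := by
      intro i hi
      have : x i = y i := congrFun hxy ⟨i, hi⟩
      simp [this]
    have := hI _ hz hz0
    funext i
    have h := congrFun this i
    simp only [Pi.sub_apply, Pi.zero_apply, sub_eq_zero] at h
    exact_mod_cast h
  have hTf : T.Finite := by rw [hTfin]; exact (Fintype.piFinset _).finite_toSet
  calc S.ncard ≤ T.ncard := Set.ncard_le_ncard_of_injOn _ hmap hinj hTf
    _ = k ^ m := by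
        rw [hTfin, Set.ncard_coe_finset, Fintype.card_piFinset]
        simp only [Int.card_Icc, Finset.prod_const, Finset.card_univ]
        have : ((k : ℤ) + 1 - 1).toNat = k := by simp
        rw [this, Fintype.card_coe, hIcard]
end

section
/- Let P be a finite set, and for each p ∈ P let V_p ⊆ ℚ^n be a subspace and j_p ∈ ℕ^n a point, such that ℕ^n ⊆ ⋃_{p ∈ P} (j_p + V_p). Then some V_p has dimension n, i.e., V_p = ℚ^n. -/
open Polynomial

/-- If ℕ^n is covered by finitely many translates `j_p + V_p` of subspaces of ℚ^n,
then some `V_p` is all of ℚ^n. -/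
theorem stmt7 (n : ℕ) (P : Type) [Fintype P]
    (V : P → Submodule ℚ (Fin n → ℚ)) (j : P → Fin n → ℕ)
    (hj : ∀ p k, 0 < j p k)
    (hcov : ∀ x : Fin n → ℕ, (∀ k, 0 < x k) →
      ∃ p, (fun k => (x k : ℚ)) - (fun k => (j p k : ℚ)) ∈ V p) :
    ∃ p, V p = ⊤ := by
  by_contra hne
  push_neg at hne
  -- choose a nonzero functional vanishing on each V p
  have hφ : ∀ p, ∃ f : Module.Dual ℚ (Fin n → ℚ), f ≠ 0 ∧ (V p).map f = ⊥ := fun p =>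
    Submodule.exists_dual_map_eq_bot_of_lt_top ((hne p).lt_top) inferInstance
  choose φ hφ0 hφV using hφ
  have hker : ∀ p v, v ∈ V p → φ p v = 0 := by
    intro p v hv
    have h1 : φ p v ∈ (V p).map (φ p) := Submodule.mem_map_of_mem hv
    rw [hφV p] at h1
    simpa using h1
  -- the polynomial whose value at t is φ p (t^0, t^1, ..., t^{n-1})
  set Q : P → Polynomial ℚ :=
    fun p => ∑ k : Fin n, C (φ p (Pi.single k 1)) * X ^ (k : ℕ) with hQ
  have hQcoeff : ∀ p (k : Fin n), (Q p).coeff k = φ p (Pi.single k 1) := by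
    intro p k
    rw [hQ]
    simp only [finset_sum_coeff, coeff_C_mul, coeff_X_pow]
    rw [Finset.sum_eq_single k]
    · simp
    · intro b _ hb
      have hbk : (k : ℕ) ≠ (b : ℕ) := fun h => hb (Fin.ext h.symm)
      simp [hbk]
    · simp
  have hQne : ∀ p, Q p ≠ 0 := by
    intro p hQ0
    apply hφ0 p
    apply (Pi.basisFun ℚ (Fin n)).ext
    intro i
    have := hQcoeff p i
    rw [hQ0] at this
    simpa [Pi.basisFun_apply] using this.symm
  -- avoid the roots of all Q p
  have hfin : (⋃ p, {x : ℚ | (Q p).IsRoot x}).Finite :=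
    Set.finite_iUnion fun p => Polynomial.finite_setOf_isRoot (hQne p)
  have hBfin : ({t : ℕ | (t : ℚ) ∈ ⋃ p, {x : ℚ | (Q p).IsRoot x}} ∪ {0}).Finite := by
    refine Set.Finite.union ?_ (Set.finite_singleton 0)
    exact Set.Finite.preimage (Set.injOn_of_injective Nat.cast_injective) hfin
  obtain ⟨t, ht⟩ := hBfin.infinite_compl.nonempty
  simp only [Set.mem_compl_iff, Set.mem_union, Set.mem_singleton_iff, not_or,
    Set.mem_setOf_eq, Set.mem_iUnion] at ht
  obtain ⟨htroot, ht0⟩ := ht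
  have htpos : 0 < t := Nat.pos_of_ne_zero ht0
  have hQt : ∀ p, (Q p).eval (t : ℚ) ≠ 0 := by
    intro p h
    exact htroot ⟨p, h⟩
  -- the direction vector and the evaluation formula
  set dvec : Fin n → ℚ := fun k => (t : ℚ) ^ (k : ℕ) with hdvec
  have heval : ∀ p, φ p dvec = (Q p).eval (t : ℚ) := by
    intro p
    rw [hQ]
    simp only [eval_finset_sum, eval_mul, eval_C, eval_pow, eval_X]
    rw [LinearMap.pi_apply_eq_sum_univ (φ p) dvec]
    refine Finset.sum_congr rfl fun k _ => ?_
    have hsingle : (Pi.single k 1 : Fin n → ℚ) = fun j => if k = j then 1 else 0 := by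
      funext j
      by_cases h : k = j <;> simp [Pi.single_apply, h, eq_comm]
    rw [hdvec, ← hsingle, smul_eq_mul, mul_comm]
  -- the family of witness points
  have hxpos : ∀ s : ℕ, ∀ k : Fin n, 0 < 1 + s * t ^ (k : ℕ) := fun s k =>
    Nat.lt_of_lt_of_le Nat.zero_lt_one (Nat.le_add_right 1 _)
  choose pp hpp using fun s : ℕ => hcov (fun k => 1 + s * t ^ (k : ℕ)) (hxpos s)
  -- each p can serve at most one s
  have key : ∀ s : ℕ,
      φ (pp s) ((fun _ => (1 : ℚ)) - fun k => (j (pp s) k : ℚ)) +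
        (s : ℚ) * (Q (pp s)).eval (t : ℚ) = 0 := by
    intro s
    have hmem := hker (pp s) _ (hpp s)
    have hvec : ((fun k : Fin n => ((1 + s * t ^ (k : ℕ) : ℕ) : ℚ)) - fun k => (j (pp s) k : ℚ)) =
        ((fun _ => (1 : ℚ)) - fun k => (j (pp s) k : ℚ)) + (s : ℚ) • dvec := by
      funext k
      simp only [Pi.sub_apply, Pi.add_apply, Pi.smul_apply, hdvec, smul_eq_mul]
      push_cast
      ring
    rw [hvec, map_add, map_smul, smul_eq_mul, heval] at hmem
    exact hmem
  -- pigeonhole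
  obtain ⟨s, s', hss', heq⟩ := Finite.exists_ne_map_eq_of_infinite pp
  apply hss'
  have h1 := key s
  have h2 := key s'
  rw [heq] at h1
  have h3 : (s : ℚ) * (Q (pp s')).eval (t : ℚ) = (s' : ℚ) * (Q (pp s')).eval (t : ℚ) := by
    linarith [h1, h2]
  have := mul_right_cancel₀ (hQt (pp s')) h3
  exact_mod_cast this
end

section
/- An affine subspace (translate of a linear subspace) of ℚ^n of dimension m intersects any finite grid A₁ × A₂ × ⋯ × Aₙ, where each Aᵢ ⊆ ℚ has cardinality k, in at most k^m points. -/
/-!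
Projecting `ℚ^n` onto a suitable set of `m = dim V` coordinates is injective on `V`: the coordinate
forms restricted to `V` span its dual, so `m` of them form a basis of it. Hence it is injective on
`v + V` too, and it maps the points of the grid into a product of `m` of the `Aᵢ`, of size `k^m`.
-/
open Module Submodule

section
variable {K V ι : Type*} [Field K] [AddCommGroup V] [Module K V] [FiniteDimensional K V]

theorem exists_finset_card_eq_finrank_iInf_ker_eq_bot [Fintype ι] (f : ι → Dual K V)
    (hf : ⨅ i, LinearMap.ker (f i) = ⊥) :
    ∃ s : Finset ι, s.card = finrank K V ∧ ⨅ i ∈ s, LinearMap.ker (f i) = ⊥ := by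
  classical
  have hspan : span K (Set.range f) = ⊤ :=
    eq_top_iff.2 fun g _ ↦ FiniteDimensional.mem_span_of_iInf_ker_le_ker (by simp [hf])
  obtain ⟨b, -, -, hfb, hb⟩ :=
    exists_linearIndepOn_extension (linearIndepOn_empty K f) (Set.empty_subset Set.univ)
  have hbspan : span K (f '' b) = ⊤ := by
    rw [eq_top_iff, ← hspan, span_le, ← Set.image_univ]
    exact hfb
  refine ⟨b.toFinset, ?_, ?_⟩
  · rw [Set.toFinset_card, linearIndependent_iff_card_eq_finrank_span.1 hb, Set.finrank,
      ← Set.image_eq_range, hbspan, finrank_top, Subspace.dual_finrank_eq]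
  · refine eq_bot_iff.2 fun x hx ↦ ?_
    have hbx : span K (f '' b) ≤ LinearMap.ker (Dual.eval K V x) := by
      rw [span_le]
      rintro _ ⟨i, hi, rfl⟩
      simp only [mem_iInf] at hx
      simpa using hx i (Set.mem_toFinset.2 hi)
    rw [hbspan] at hbx
    exact (mem_bot K).2 <| (forall_dual_apply_eq_zero_iff K x).1 fun g ↦ hbx mem_top

theorem Submodule.exists_finset_card_eq_finrank_injOn_restrict [Fintype ι]
    (W : Submodule K (ι → K)) :
    ∃ s : Finset ι, s.card = finrank K W ∧ Set.InjOn s.restrict (W : Set (ι → K)) := by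
  have hW : ⨅ i, LinearMap.ker ((LinearMap.proj i).comp W.subtype) = ⊥ := by
    refine eq_bot_iff.2 fun x hx ↦ (mem_bot K).2 <| Subtype.ext <| funext fun i ↦ ?_
    simpa using (mem_iInf _).1 hx i
  obtain ⟨s, hcard, hs⟩ := exists_finset_card_eq_finrank_iInf_ker_eq_bot _ hW
  refine ⟨s, hcard, fun x hx y hy hxy ↦ sub_eq_zero.1 ?_⟩
  have hmem : (⟨x - y, W.sub_mem hx hy⟩ : W) ∈ ⨅ i ∈ s, LinearMap.ker
      ((LinearMap.proj i).comp W.subtype) := by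
    simp only [mem_iInf]
    intro i hi
    simpa [sub_eq_zero] using congrFun hxy ⟨i, hi⟩
  rw [hs] at hmem
  exact congrArg Subtype.val ((mem_bot K).1 hmem)

end

theorem Set.ncard_le_prod_card_of_injOn_restrict {ι α : Type*} (s : Finset ι)
    (A : ι → Finset α) {S : Set (ι → α)} (hS : ∀ x ∈ S, ∀ i ∈ s, x i ∈ A i)
    (hinj : Set.InjOn s.restrict S) : S.ncard ≤ ∏ i ∈ s, (A i).card := by
  classical
  calc S.ncard ≤ ((Fintype.piFinset fun i : s ↦ A i : Finset (s → α)) : Set (s → α)).ncard :=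
        Set.ncard_le_ncard_of_injOn _ (fun x hx ↦ by simpa using fun i hi ↦ hS x hx i hi) hinj
    _ = ∏ i ∈ s, (A i).card := by
        rw [Set.ncard_coe_finset, Fintype.card_piFinset,
          Finset.prod_coe_sort s fun i ↦ (A i).card]

/-- A translate of an `m`-dimensional subspace of ℚ^n meets any grid
`A₁ × ⋯ × Aₙ` with `|Aᵢ| = k` in at most `k^m` points. -/
theorem stmt10 (n m k : ℕ) (V : Submodule ℚ (Fin n → ℚ))
    (hV : Module.finrank ℚ V = m) (v : Fin n → ℚ)
    (A : Fin n → Finset ℚ) (hA : ∀ i, (A i).card = k) :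
    Set.ncard {x : Fin n → ℚ | (∀ i, x i ∈ A i) ∧ x - v ∈ V} ≤ k ^ m := by
  obtain ⟨s, hcard, hinj⟩ := V.exists_finset_card_eq_finrank_injOn_restrict
  have hinj_grid : Set.InjOn s.restrict {x : Fin n → ℚ | (∀ i, x i ∈ A i) ∧ x - v ∈ V} :=
    fun x hx y hy hxy ↦ sub_left_injective <| hinj hx.2 hy.2 <| funext fun i ↦ by
      simpa using congrFun hxy i
  calc _ ≤ ∏ i ∈ s, (A i).card :=
        Set.ncard_le_prod_card_of_injOn_restrict s A (fun x hx i _ ↦ hx.1 i) hinj_grid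
    _ = k ^ m := by rw [Finset.prod_congr rfl fun i _ ↦ hA i, Finset.prod_const, hcard, hV]
end
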